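/- Let F be a continuous CDF, n ≥ 2, and α_1, ..., α_n > 0. If X_{α_1},...,X_{α_n} are independent random variables with X_{α_i} having CDF F^{α_i}, then P(X_{α_1} > max(X_{α_2},...,X_{α_n})) = α_1/(α_1+...+α_n). -/

import Mathlib

/-!
If `F ^ a` and `F ^ b` are both CDFs, then `F ^ b = (F ^ a) ^ (b / a)`. So with `H = F ^ α₀`, the
CDF of `X₀`, and `γ = (α₁ + ⋯ + αₙ₋₁) / α₀`, independence and continuity give
`P(max_{j ≠ 0} X_j < x) = H x ^ γ`. The probability in question is therefore `E[H(X₀) ^ γ]`, and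
since `H(X₀)` is uniform on `[0, 1]` this equals `∫₀¹ u ^ γ du = 1 / (γ + 1) = α₀ / ∑ αᵢ`.
-/

open MeasureTheory ProbabilityTheory Set Filter Topology Real

theorem Real.rpow_eq_neg_rpow_mul_cos {x : ℝ} (hx : x < 0) (y : ℝ) :
    x ^ y = (-x) ^ y * cos (y * π) := by
  rw [rpow_def_of_neg hx, rpow_def_of_pos (neg_pos.2 hx), log_neg_eq_log]

namespace ProbabilityTheory

/-- Real powers of a negative base are `x ^ a = (-x) ^ a * cos (a * π)`, so `F` may be negative.
Where `F` vanishes to the right of `t`, both powers vanish at `t` by monotonicity; otherwise `F < 0`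
on `[t, ∞)`, and both CDFs tending to `1` there forces `cos (b * π) = cos (a * π) ^ (b / a)`. -/
theorem rpow_eq_rpow_rpow_div_of_cdf {μ ν : Measure ℝ} [IsProbabilityMeasure μ]
    [IsProbabilityMeasure ν] {F : ℝ → ℝ} (hF : Continuous F) {a b : ℝ} (ha : 0 < a) (hb : 0 < b)
    (hμ : ∀ t, cdf μ t = F t ^ a) (hν : ∀ t, cdf ν t = F t ^ b) (t : ℝ) :
    F t ^ b = (F t ^ a) ^ (b / a) := by
  rcases le_or_gt 0 (F t) with hFt | hFt
  · rw [← rpow_mul hFt, mul_div_cancel₀ _ ha.ne']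
  by_cases hzero : ∃ u, t ≤ u ∧ 0 ≤ F u
  · obtain ⟨u, htu, hFu⟩ := hzero
    obtain ⟨v, hv, hFv⟩ := intermediate_value_Icc htu hF.continuousOn ⟨hFt.le, hFu⟩
    have hvanish (κ : Measure ℝ) (c : ℝ) (hc : 0 < c) (hκ : ∀ s, cdf κ s = F s ^ c) :
        F t ^ c = 0 :=
      le_antisymm (by simpa [hκ, hFv, zero_rpow hc.ne'] using monotone_cdf κ hv.1)
        (hκ t ▸ cdf_nonneg κ t)
    rw [hvanish ν b hb hν, hvanish μ a ha hμ, zero_rpow (div_pos hb ha).ne']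
  push Not at hzero
  have hca : 0 ≤ cos (a * π) := by
    refine nonneg_of_mul_nonneg_right ?_ (rpow_pos_of_pos (neg_pos.2 hFt) a)
    rw [← rpow_eq_neg_rpow_mul_cos hFt, ← hμ]
    exact cdf_nonneg μ t
  have hpow {u : ℝ} (hu : F u < 0) : (F u ^ a) ^ (b / a) = (-F u) ^ b * cos (a * π) ^ (b / a) := by
    rw [rpow_eq_neg_rpow_mul_cos hu, mul_rpow (rpow_nonneg (neg_nonneg.2 hu.le) _) hca,
      ← rpow_mul (neg_nonneg.2 hu.le), mul_div_cancel₀ _ ha.ne']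
  have hcos : cos (a * π) ^ (b / a) = cos (b * π) := by
    have hlim_a : Tendsto (fun u ↦ (F u ^ a) ^ (b / a) * cos (b * π)) atTop (𝓝 (cos (b * π))) := by
      simpa using (((tendsto_cdf_atTop μ).congr hμ).rpow_const (Or.inl one_ne_zero)).mul_const
        (cos (b * π))
    have hlim_b : Tendsto (fun u ↦ F u ^ b * cos (a * π) ^ (b / a)) atTop
        (𝓝 (cos (a * π) ^ (b / a))) := by
      simpa using ((tendsto_cdf_atTop ν).congr hν).mul_const (cos (a * π) ^ (b / a))
    refine tendsto_nhds_unique (hlim_b.congr' ?_) hlim_a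
    filter_upwards [eventually_ge_atTop t] with u hu
    rw [hpow (hzero u hu), rpow_eq_neg_rpow_mul_cos (hzero u hu)]
    ring
  rw [hpow hFt, hcos, rpow_eq_neg_rpow_mul_cos hFt]

theorem measure_Iio_eq_ofReal_cdf {μ : Measure ℝ} [IsProbabilityMeasure μ] {x : ℝ}
    (hx : ContinuousAt (cdf μ) x) : μ (Iio x) = ENNReal.ofReal (cdf μ x) := by
  have := (cdf μ).measure_Iio (tendsto_cdf_atBot μ) x
  rwa [measure_cdf, hx.continuousWithinAt.leftLim_eq, sub_zero] at this

theorem measure_setOf_cdf_le {μ : Measure ℝ} [IsProbabilityMeasure μ] (hc : Continuous (cdf μ))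
    {s : ℝ} (hs0 : 0 ≤ s) (hs1 : s < 1) : μ {x | cdf μ x ≤ s} = ENNReal.ofReal s := by
  set A := {x | cdf μ x ≤ s}
  rcases A.eq_empty_or_nonempty with hA | hA
  · have : s ≤ 0 := ge_of_tendsto (tendsto_cdf_atBot μ) (Eventually.of_forall fun x ↦
      le_of_lt (not_le.1 fun hx ↦ hA.subset hx))
    rw [hA, measure_empty, le_antisymm this hs0, ENNReal.ofReal_zero]
  obtain ⟨b, hb⟩ := eventually_atTop.1 ((tendsto_cdf_atTop μ).eventually (eventually_gt_nhds hs1))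
  have hbdd : BddAbove A := ⟨b, fun x hx ↦ le_of_not_gt fun hbx ↦ (hb x hbx.le).not_ge hx⟩
  have hclosed : IsClosed A := isClosed_le hc continuous_const
  have hlower : IsLowerSet A := fun x y hyx hx ↦ (monotone_cdf μ hyx).trans hx
  have hAIic : A = Iic (sSup A) := by
    rw [← lowerClosure_eq_Iic_csSup hA hbdd hclosed, hlower.lowerClosure]
  have hsup : cdf μ (sSup A) = s := by
    refine le_antisymm (hclosed.csSup_mem hA hbdd) (ge_of_tendsto
      (hc.continuousAt.tendsto.mono_left (nhdsWithin_le_nhds (s := Ioi (sSup A)))) ?_)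
    filter_upwards [self_mem_nhdsWithin] with x hx
    exact le_of_lt (not_le.1 fun h ↦ (not_le.2 hx) (le_csSup hbdd h))
  rw [hAIic, ← ofReal_cdf, hsup]

theorem map_cdf_eq_volume_restrict_Icc {μ : Measure ℝ} [IsProbabilityMeasure μ]
    (hc : Continuous (cdf μ)) : μ.map (cdf μ) = volume.restrict (Icc 0 1) := by
  have : IsProbabilityMeasure (μ.map (cdf μ)) := Measure.isProbabilityMeasure_map hc.aemeasurable
  have : IsFiniteMeasure (volume.restrict (Icc (0 : ℝ) 1)) := by
    exact isFiniteMeasure_restrict.2 measure_Icc_lt_top.ne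
  refine Measure.ext_of_Iic _ _ fun s ↦ ?_
  have hI : Iic s ∩ Icc 0 1 = Icc 0 (min s 1) := by
    ext; simp only [mem_inter_iff, mem_Iic, mem_Icc, le_min_iff]; tauto
  rw [Measure.map_apply hc.measurable measurableSet_Iic, Measure.restrict_apply measurableSet_Iic,
    hI, Real.volume_Icc, sub_zero]
  rcases lt_or_ge s 0 with hs0 | hs0
  · have : cdf μ ⁻¹' Iic s = ∅ := eq_empty_of_forall_notMem fun x hx ↦
      (hs0.trans_le (cdf_nonneg μ x)).not_ge hx
    rw [this, measure_empty, ENNReal.ofReal_of_nonpos ((min_le_left _ _).trans hs0.le)]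
  rcases lt_or_ge s 1 with hs1 | hs1
  · rw [min_eq_left hs1.le, ← measure_setOf_cdf_le hc hs0 hs1]
    rfl
  · have : cdf μ ⁻¹' Iic s = univ := eq_univ_of_forall fun x ↦ (cdf_le_one μ x).trans hs1
    rw [this, min_eq_right hs1, measure_univ, ENNReal.ofReal_one]

theorem lintegral_ofReal_cdf_rpow {μ : Measure ℝ} [IsProbabilityMeasure μ]
    (hc : Continuous (cdf μ)) {γ : ℝ} (hγ : 0 ≤ γ) :
    ∫⁻ x, ENNReal.ofReal (cdf μ x ^ γ) ∂μ = ENNReal.ofReal (1 / (γ + 1)) := by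
  have hpow : Continuous fun u : ℝ ↦ u ^ γ := continuous_id.rpow_const fun _ ↦ Or.inr hγ
  calc ∫⁻ x, ENNReal.ofReal (cdf μ x ^ γ) ∂μ
      = ∫⁻ u in Icc 0 1, ENNReal.ofReal (u ^ γ) := by
        rw [← map_cdf_eq_volume_restrict_Icc hc]
        exact (lintegral_map (ENNReal.measurable_ofReal.comp hpow.measurable) hc.measurable).symm
    _ = ENNReal.ofReal (∫ u in (0 : ℝ)..1, u ^ γ) := by
        rw [intervalIntegral.integral_of_le zero_le_one, ← integral_Icc_eq_integral_Ioc,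
          ofReal_integral_eq_lintegral_ofReal hpow.continuousOn.integrableOn_Icc
            ((ae_restrict_iff' measurableSet_Icc).2 (ae_of_all _ fun u hu ↦ rpow_nonneg hu.1 γ))]
    _ = ENNReal.ofReal (1 / (γ + 1)) := by
        rw [integral_rpow (Or.inl (by linarith)), one_rpow, zero_rpow (by linarith)]
        norm_num

theorem IndepFun.measure_preimage_eq_lintegral {Ω α β : Type*} [MeasurableSpace Ω]
    [MeasurableSpace α] [MeasurableSpace β] {P : Measure Ω} [IsFiniteMeasure P]
    {X : Ω → α} {Y : Ω → β} (hXY : IndepFun X Y P) (hX : Measurable X) (hY : Measurable Y)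
    {S : Set (α × β)} (hS : MeasurableSet S) :
    P ((fun ω ↦ (X ω, Y ω)) ⁻¹' S) = ∫⁻ x, P (Y ⁻¹' (Prod.mk x ⁻¹' S)) ∂(P.map X) := by
  rw [← Measure.map_apply (hX.prodMk hY) hS,
    (indepFun_iff_map_prod_eq_prod_map_map hX.aemeasurable hY.aemeasurable).1 hXY,
    Measure.prod_apply hS]
  exact lintegral_congr fun x ↦ Measure.map_apply hY (measurable_prodMk_left hS)

theorem iIndepFun.measure_forall_lt_eq_lintegral {Ω ι : Type*} [MeasurableSpace Ω]
    {P : Measure Ω} [IsProbabilityMeasure P] [Fintype ι] [DecidableEq ι] {X : ι → Ω → ℝ}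
    (hind : iIndepFun X P) (hX : ∀ i, Measurable (X i)) (i : ι) :
    P {ω | ∀ j, j ≠ i → X j ω < X i ω}
      = ∫⁻ x, ∏ j ∈ Finset.univ.erase i, P (X j ⁻¹' Iio x) ∂(P.map (X i)) := by
  set T := Finset.univ.erase i
  have hindT : IndepFun (X i) (fun ω (j : T) ↦ X j ω) P := by
    simpa [Function.comp_def] using (hind.indepFun_finset {i} T (by simp [T]) hX).comp
      (measurable_pi_apply ⟨i, Finset.mem_singleton_self i⟩) measurable_id
  have hS : MeasurableSet {p : ℝ × (T → ℝ) | ∀ j, p.2 j < p.1} := by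
    simp only [ofPred_forall]
    exact MeasurableSet.iInter fun j ↦
      measurableSet_lt ((measurable_pi_apply j).comp measurable_snd) measurable_fst
  have hevent : {ω | ∀ j, j ≠ i → X j ω < X i ω}
      = (fun ω ↦ (X i ω, fun j : T ↦ X j ω)) ⁻¹' {p | ∀ j, p.2 j < p.1} := by
    ext ω; simp [T]
  rw [hevent, hindT.measure_preimage_eq_lintegral (hX i) (measurable_pi_lambda _ fun j ↦ hX j) hS]
  refine lintegral_congr fun x ↦ ?_
  have hfiber : (fun ω (j : T) ↦ X j ω) ⁻¹' (Prod.mk x ⁻¹' {p | ∀ j, p.2 j < p.1})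
      = ⋂ j ∈ T, X j ⁻¹' Iio x := by
    ext ω; simp [T]
  rw [hfiber, hind.measure_inter_preimage_eq_mul T fun _ _ ↦ measurableSet_Iio]

end ProbabilityTheory

/-- The family `{F^α : α > 0}` is max-compatible: if `X i` are independent with
CDFs `F^(α i)` for a continuous CDF `F`, then
`P(X 0 > max of the others) = α 0 / ∑ α i`. -/
theorem pow_family_maxCompatible
    {Ω : Type} [MeasureSpace Ω] [IsProbabilityMeasure (ℙ : Measure Ω)]
    (F : ℝ → ℝ) (hFc : Continuous F)
    (n : ℕ) (hn : 2 ≤ n) (α : Fin n → ℝ) (hα : ∀ i, 0 < α i)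
    (X : Fin n → Ω → ℝ) (hXm : ∀ i, Measurable (X i))
    (hindep : iIndepFun X ℙ)
    (hcdf : ∀ i t, (ℙ {ω | X i ω ≤ t}).toReal = F t ^ (α i)) :
    (ℙ {ω | ∀ j, j ≠ (⟨0, by omega⟩ : Fin n) → X j ω < X (⟨0, by omega⟩ : Fin n) ω}).toReal
      = α ⟨0, by omega⟩ / ∑ i, α i := by
  classical
  set i₀ : Fin n := ⟨0, by omega⟩
  set μ : Fin n → Measure ℝ := fun i ↦ Measure.map (X i) ℙ
  have (i : Fin n) : IsProbabilityMeasure (μ i) :=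
    Measure.isProbabilityMeasure_map (hXm i).aemeasurable
  have hμ (i : Fin n) (t : ℝ) : cdf (μ i) t = F t ^ α i := by
    rw [cdf_eq_real, measureReal_def, Measure.map_apply (hXm i) measurableSet_Iic]
    exact hcdf i t
  have hcont (i : Fin n) : Continuous (cdf (μ i)) := by
    rw [show ⇑(cdf (μ i)) = _ from funext (hμ i)]
    exact hFc.rpow_const fun _ ↦ Or.inr (hα i).le
  set β := ∑ j ∈ Finset.univ.erase i₀, α j
  have hprod (x : ℝ) : ∏ j ∈ Finset.univ.erase i₀, ℙ (X j ⁻¹' Iio x)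
      = ENNReal.ofReal (cdf (μ i₀) x ^ (β / α i₀)) := by
    have hF₀ : 0 ≤ F x ^ α i₀ := hμ i₀ x ▸ cdf_nonneg _ x
    calc ∏ j ∈ Finset.univ.erase i₀, ℙ (X j ⁻¹' Iio x)
        = ∏ j ∈ Finset.univ.erase i₀, ENNReal.ofReal ((F x ^ α i₀) ^ (α j / α i₀)) := by
          refine Finset.prod_congr rfl fun j _ ↦ ?_
          rw [← Measure.map_apply (hXm j) measurableSet_Iio,
            measure_Iio_eq_ofReal_cdf (hcont j).continuousAt, hμ,
            rpow_eq_rpow_rpow_div_of_cdf hFc (hα i₀) (hα j) (hμ i₀) (hμ j)]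
      _ = ENNReal.ofReal (cdf (μ i₀) x ^ (β / α i₀)) := by
          rw [← ENNReal.ofReal_prod_of_nonneg fun j _ ↦ rpow_nonneg hF₀ _,
            ← rpow_sum_of_nonneg hF₀ fun j _ ↦ (div_pos (hα j) (hα i₀)).le, ← Finset.sum_div, hμ]
  have hγ : 0 ≤ β / α i₀ := div_nonneg (Finset.sum_nonneg fun j _ ↦ (hα j).le) (hα i₀).le
  rw [hindep.measure_forall_lt_eq_lintegral hXm i₀, lintegral_congr hprod,
    lintegral_ofReal_cdf_rpow (hcont i₀) hγ, ENNReal.toReal_ofReal (by positivity),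
    ← Finset.add_sum_erase _ _ (Finset.mem_univ i₀), div_add_one (hα i₀).ne', one_div_div,
    add_comm]
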